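/- Subdividing a Poisson customer into consecutive co-located Poisson subcustomers does not increase the OR recourse: let p = (i_1, …, i_t) be a path where customer i_k has demand distributed as Poisson(t_k · μ̄) for integers t_k ≥ 1 and a real μ̄ > 0, and let p' be the refined path obtained by replacing each customer i_k by t_k consecutive subcustomers located at the same point (each subcustomer has the same depot distance c_{0,i_k} and the same inter-point distances as i_k, distances between subcustomers of the same group being 0), with independent demands each distributed as Poisson(μ̄). Then Q̄^OR_{p'} ≤ Q̄^OR_{p}. -/

import Mathlib

open ENNReal NNReal ProbabilityTheory

/-- `Ψ(s, q) = max(⌈(s − q)/Q⌉, 0)`. -/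
noncomputable def psi (Q s q : ℕ) : ℕ := (⌈((s : ℚ) - (q : ℚ)) / (Q : ℚ)⌉).toNat

/-- The optimal-restocking (OR) expected cost-to-go `F(i, L, q)`. -/
noncomputable def orF {N : Type*} (ρ : N → PMF ℕ) (Q : ℕ) (cF : N → ℝ) (cP : N → N → ℝ) :
    N → List N → ℕ → ℝ≥0∞
  | _, [], _ => 0
  | i, j :: L', q =>
    min
      (∑' s : ℕ, (ENNReal.ofReal (cF j) * (psi Q s q : ℝ≥0∞)
          + orF ρ Q cF cP j L' (psi Q s q * Q + q - s)) * ρ j s)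
      (ENNReal.ofReal (cP i j) +
        ∑' s : ℕ, (ENNReal.ofReal (cF j) * (psi Q s Q : ℝ≥0∞)
          + orF ρ Q cF cP j L' (psi Q s Q * Q + Q - s)) * ρ j s)

/-- The OR cost-to-go `H(j :: L', q)` of proceeding directly to customer `j`. -/
noncomputable def orH {N : Type*} (ρ : N → PMF ℕ) (Q : ℕ) (cF : N → ℝ) (cP : N → N → ℝ)
    (j : N) (L' : List N) (q : ℕ) : ℝ≥0∞ :=
  ∑' s : ℕ, (ENNReal.ofReal (cF j) * (psi Q s q : ℝ≥0∞)
      + orF ρ Q cF cP j L' (psi Q s q * Q + q - s)) * ρ j s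

/-- `Q̄ᴼᴿ_p = H(p, Q)`. -/
noncomputable def QbarOR {N : Type*} (ρ : N → PMF ℕ) (Q : ℕ) (cF : N → ℝ)
    (cP : N → N → ℝ) : List N → ℝ≥0∞
  | [] => 0
  | j :: L' => orH ρ Q cF cP j L' Q


section Aux
open Real Nat
lemma psi_le {Q : ℕ} (hQ : 1 ≤ Q) (s q : ℕ) : s ≤ psi Q s q * Q + q := by
  have hQ' : (0:ℚ) < Q := by exact_mod_cast hQ
  have h1 : ((s:ℚ) - q) / Q ≤ (⌈((s:ℚ) - q) / Q⌉ : ℚ) := Int.le_ceil _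
  have h2' : (⌈((s:ℚ) - q) / Q⌉ : ℤ) ≤ (⌈((s:ℚ) - q) / Q⌉.toNat : ℤ) := Int.self_le_toNat _
  have h2 : (⌈((s:ℚ) - q) / Q⌉ : ℚ) ≤ ((⌈((s:ℚ) - q) / Q⌉.toNat : ℕ) : ℚ) := by
    exact_mod_cast h2'
  have h3 : ((s:ℚ) - q) / Q ≤ ((psi Q s q : ℕ) : ℚ) := le_trans h1 h2
  rw [div_le_iff₀ hQ'] at h3
  have : (s:ℚ) ≤ (psi Q s q : ℚ) * Q + q := by linarith
  exact_mod_cast this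

lemma psi_lt {Q : ℕ} (hQ : 1 ≤ Q) {s q : ℕ} (h : psi Q s q ≠ 0) :
    (psi Q s q - 1) * Q + q < s := by
  have hQ' : (0:ℚ) < Q := by exact_mod_cast hQ
  have hc : 0 < ⌈((s:ℚ) - q) / Q⌉ := by
    by_contra hc
    push_neg at hc
    exact h (by simp [psi, Int.toNat_of_nonpos hc])
  have hpsi' : (⌈((s:ℚ) - q) / Q⌉.toNat : ℤ) = ⌈((s:ℚ) - q) / Q⌉ := Int.toNat_of_nonneg hc.le
  have hpsi : ((psi Q s q : ℕ) : ℚ) = (⌈((s:ℚ) - q) / Q⌉ : ℚ) := by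
    unfold psi; exact_mod_cast hpsi'
  have h1 : (⌈((s:ℚ) - q) / Q⌉ : ℚ) - 1 < ((s:ℚ) - q) / Q := by
    have := Int.ceil_lt_add_one (((s:ℚ) - q) / Q)
    push_cast at this ⊢
    linarith
  have h1' : ((psi Q s q : ℚ) - 1) < ((s:ℚ) - q) / Q := by rw [hpsi]; exact h1
  have h2 : ((psi Q s q : ℚ) - 1) * Q < (s:ℚ) - q := by
    exact (lt_div_iff₀ hQ').mp h1'
  have hpos : 1 ≤ psi Q s q := Nat.one_le_iff_ne_zero.mpr h
  have : ((psi Q s q - 1 : ℕ) : ℚ) * Q + q < (s:ℚ) := by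
    push_cast [Nat.cast_sub hpos]
    linarith
  exact_mod_cast this

lemma psi_eq_of {Q : ℕ} (hQ : 1 ≤ Q) {s q n : ℕ} (h1 : s ≤ n * Q + q)
    (h2 : n = 0 ∨ (n - 1) * Q + q < s) : psi Q s q = n := by
  set m := psi Q s q with hm
  have hQ0 : 0 < Q := hQ
  have hmn : m ≤ n := by
    rcases Nat.eq_zero_or_pos m with h | h
    · omega
    · have := psi_lt hQ (q := q) (s := s) (by omega)
      rw [← hm] at this
      have hlt : (m - 1) * Q < n * Q := by omega
      have := Nat.lt_of_mul_lt_mul_right hlt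
      omega
  have hnm : n ≤ m := by
    rcases h2 with h | h
    · omega
    · have hle := psi_le hQ s q
      rw [← hm] at hle
      have hlt : (n - 1) * Q < m * Q := by omega
      have := Nat.lt_of_mul_lt_mul_right hlt
      omega
  omega

lemma psi_add {Q : ℕ} (hQ : 1 ≤ Q) (s1 s2 q : ℕ) :
    psi Q (s1 + s2) q = psi Q s1 q + psi Q s2 (psi Q s1 q * Q + q - s1) := by
  set A := psi Q s1 q with hA
  set q1 := A * Q + q - s1 with hq1
  set B := psi Q s2 q1 with hB
  have h1 : s1 ≤ A * Q + q := psi_le hQ s1 q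
  have h2 : s2 ≤ B * Q + q1 := psi_le hQ s2 q1
  have hAB : (A + B) * Q = A * Q + B * Q := add_mul _ _ _
  refine psi_eq_of hQ (by omega) ?_
  rcases Nat.eq_zero_or_pos B with hB0 | hB0
  · rcases Nat.eq_zero_or_pos A with hA0 | hA0
    · left; omega
    · right
      have h3 : (A - 1) * Q + q < s1 := psi_lt hQ (by omega)
      have h4 : A * Q = (A - 1) * Q + Q := by
        have : A - 1 + 1 = A := by omega
        calc A * Q = (A - 1 + 1) * Q := by rw [this]
        _ = (A - 1) * Q + Q := by ring
      have hBQ : B * Q = 0 := by rw [hB0, zero_mul]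
      have h6 : (A + B - 1) * Q = (A - 1) * Q := by rw [hB0, Nat.add_zero]
      omega
  · right
    have h3 : (B - 1) * Q + q1 < s2 := psi_lt hQ (by omega)
    have h4 : B * Q = (B - 1) * Q + Q := by
      have : B - 1 + 1 = B := by omega
      calc B * Q = (B - 1 + 1) * Q := by rw [this]
      _ = (B - 1) * Q + Q := by ring
    have h5 : (A + B - 1) * Q = A * Q + (B - 1) * Q := by
      have : A + B - 1 = A + (B - 1) := by omega
      rw [this, add_mul]
    omega

lemma psi_q_add {Q : ℕ} (hQ : 1 ≤ Q) (s1 s2 q : ℕ) :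
    psi Q s2 (psi Q s1 q * Q + q - s1) * Q + (psi Q s1 q * Q + q - s1) - s2
      = psi Q (s1 + s2) q * Q + q - (s1 + s2) := by
  have hadd := psi_add hQ s1 s2 q
  set A := psi Q s1 q
  set q1 := A * Q + q - s1 with hq1
  set B := psi Q s2 q1
  have h1 : s1 ≤ A * Q + q := psi_le hQ s1 q
  have h2 : s2 ≤ B * Q + q1 := psi_le hQ s2 q1
  have hAB : (A + B) * Q = A * Q + B * Q := add_mul _ _ _
  rw [hadd]
  omega



lemma poissonPMF_apply (r : ℝ≥0) (n : ℕ) :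
    poissonPMF r n = ENNReal.ofReal (poissonPMFReal r n) := rfl

lemma poisson_real_conv (a b : ℝ≥0) (n : ℕ) :
    ∑ k ∈ Finset.range (n+1), poissonPMFReal a k * poissonPMFReal b (n - k)
      = poissonPMFReal (a + b) n := by
  unfold poissonPMFReal
  have hsum : ∀ k ∈ Finset.range (n+1),
      Real.exp (-(a:ℝ)) * (a:ℝ) ^ k / (Nat.factorial k) *
        (Real.exp (-(b:ℝ)) * (b:ℝ) ^ (n-k) / (Nat.factorial (n-k)))
      = Real.exp (-((a:ℝ)+(b:ℝ))) / (Nat.factorial n) *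
        ((a:ℝ) ^ k * (b:ℝ) ^ (n-k) * (n.choose k)) := by
    intro k hk
    have hk' : k ≤ n := by
      have := Finset.mem_range.mp hk; omega
    have hc : ((n.choose k : ℕ) : ℝ) = (Nat.factorial n : ℝ) /
        ((Nat.factorial k : ℝ) * (Nat.factorial (n-k) : ℝ)) := Nat.cast_choose ℝ hk'
    have h1 : (Nat.factorial k : ℝ) ≠ 0 := by positivity
    have h2 : (Nat.factorial (n-k) : ℝ) ≠ 0 := by positivity
    have h3 : (Nat.factorial n : ℝ) ≠ 0 := by positivity
    have hexp : Real.exp (-(a:ℝ)) * Real.exp (-(b:ℝ)) = Real.exp (-((a:ℝ)+(b:ℝ))) := by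
      rw [← Real.exp_add]; ring_nf
    rw [hc, ← hexp]
    field_simp
  rw [Finset.sum_congr rfl hsum, ← Finset.mul_sum]
  have hbin : ∑ k ∈ Finset.range (n+1), (a:ℝ) ^ k * (b:ℝ) ^ (n-k) * (n.choose k)
      = ((a:ℝ) + (b:ℝ)) ^ n := (add_pow (a:ℝ) (b:ℝ) n).symm
  rw [hbin]
  push_cast
  ring

lemma poisson_conv_pt (a b : ℝ≥0) (n : ℕ) :
    ∑ k ∈ Finset.range (n+1), poissonPMF a k * poissonPMF b (n - k)
      = poissonPMF (a + b) n := by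
  calc ∑ k ∈ Finset.range (n+1), poissonPMF a k * poissonPMF b (n - k)
      = ∑ k ∈ Finset.range (n+1),
          ENNReal.ofReal (poissonPMFReal a k * poissonPMFReal b (n - k)) := by
        refine Finset.sum_congr rfl fun k _ => ?_
        rw [poissonPMF_apply, poissonPMF_apply,
          ENNReal.ofReal_mul poissonPMFReal_nonneg]
    _ = ENNReal.ofReal (∑ k ∈ Finset.range (n+1),
          poissonPMFReal a k * poissonPMFReal b (n - k)) :=
        (ENNReal.ofReal_sum_of_nonneg fun k _ =>
          mul_nonneg poissonPMFReal_nonneg poissonPMFReal_nonneg).symm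
    _ = poissonPMF (a + b) n := by rw [poisson_real_conv, poissonPMF_apply]

def diagEquiv : (Σ n : ℕ, Fin (n+1)) ≃ ℕ × ℕ where
  toFun x := (x.2.1, x.1 - x.2.1)
  invFun y := ⟨y.1 + y.2, ⟨y.1, by omega⟩⟩
  left_inv x := by
    rcases x with ⟨n, k⟩
    have : (k : ℕ) ≤ n := by omega
    simp only
    congr 1
    · omega
    · refine Fin.heq_ext_iff ?_ |>.mpr ?_
      · omega
      · simp
  right_inv y := by
    rcases y with ⟨s1, s2⟩
    simp

lemma poisson_conv (a b : ℝ≥0) (f : ℕ → ℝ≥0∞) :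
    ∑' s1 : ℕ, (∑' s2 : ℕ, f (s1 + s2) * poissonPMF b s2) * poissonPMF a s1
      = ∑' s : ℕ, f s * poissonPMF (a + b) s := by
  set F : ℕ × ℕ → ℝ≥0∞ := fun x => f (x.1 + x.2) * poissonPMF b x.2 * poissonPMF a x.1 with hF
  calc ∑' s1 : ℕ, (∑' s2 : ℕ, f (s1 + s2) * poissonPMF b s2) * poissonPMF a s1
      = ∑' s1 : ℕ, ∑' s2 : ℕ, F (s1, s2) := by
        refine tsum_congr fun s1 => ?_
        exact ENNReal.tsum_mul_right.symm
    _ = ∑' x : ℕ × ℕ, F x := (ENNReal.tsum_prod (f := fun s1 s2 => F (s1, s2))).symm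
    _ = ∑' y : Σ n : ℕ, Fin (n+1), F (diagEquiv y) := (diagEquiv.tsum_eq F).symm
    _ = ∑' n : ℕ, ∑' k : Fin (n+1), F (diagEquiv ⟨n, k⟩) :=
        ENNReal.tsum_sigma' _
    _ = ∑' n : ℕ, f n * poissonPMF (a + b) n := by
        refine tsum_congr fun n => ?_
        rw [tsum_fintype]
        have hpt : ∀ k : Fin (n+1),
            F (diagEquiv ⟨n, k⟩) = f n * (poissonPMF a k.1 * poissonPMF b (n - k.1)) := by
          intro k
          have hk : (k : ℕ) ≤ n := by omega
          simp only [hF, diagEquiv, Equiv.coe_fn_mk]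
          rw [Nat.add_sub_cancel' hk]
          ring
        rw [Finset.sum_congr rfl (fun k _ => hpt k), ← Finset.mul_sum,
          Fin.sum_univ_eq_sum_range (fun k => poissonPMF a k * poissonPMF b (n - k)) (n+1),
          poisson_conv_pt]





variable {M : Type*} (ρ : M → PMF ℕ) (Q : ℕ) (cF : M → ℝ) (cP : M → M → ℝ)

lemma orF_nil (i : M) (q : ℕ) : orF ρ Q cF cP i ([] : List M) q = 0 := rfl

lemma orF_cons (i j : M) (L : List M) (q : ℕ) :
    orF ρ Q cF cP i (j :: L) q
      = min (orH ρ Q cF cP j L q) (ENNReal.ofReal (cP i j) + orH ρ Q cF cP j L Q) := rfl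

lemma orF_le_orH (i j : M) (L : List M) (q : ℕ) :
    orF ρ Q cF cP i (j :: L) q ≤ orH ρ Q cF cP j L q := by
  rw [orF_cons]; exact min_le_left _ _


lemma step {M : Type*} (ρ : M → PMF ℕ) {Q : ℕ} (hQ : 1 ≤ Q) (cF : M → ℝ) (cP : M → M → ℝ)
    (j : M) (L : List M) (ν κ : ℝ≥0) (cf : ℝ) (G : ℕ → ℝ≥0∞)
    (hρj : ρ j = poissonPMF ν) (hcf : cF j = cf)
    (hrec : ∀ q1 : ℕ, orF ρ Q cF cP j L q1
      ≤ ∑' s : ℕ, (ENNReal.ofReal cf * (psi Q s q1 : ℝ≥0∞)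
          + G (psi Q s q1 * Q + q1 - s)) * poissonPMF κ s)
    (q : ℕ) :
    orH ρ Q cF cP j L q ≤ ∑' s : ℕ, (ENNReal.ofReal cf * (psi Q s q : ℝ≥0∞)
        + G (psi Q s q * Q + q - s)) * poissonPMF (ν + κ) s := by
  have hstep1 : orH ρ Q cF cP j L q
      ≤ ∑' s1 : ℕ, (ENNReal.ofReal cf * (psi Q s1 q : ℝ≥0∞)
          + ∑' s2 : ℕ, (ENNReal.ofReal cf * (psi Q s2 (psi Q s1 q * Q + q - s1) : ℝ≥0∞)
            + G (psi Q s2 (psi Q s1 q * Q + q - s1) * Q + (psi Q s1 q * Q + q - s1) - s2))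
              * poissonPMF κ s2) * poissonPMF ν s1 := by
    rw [orH, hρj, hcf]
    refine ENNReal.tsum_le_tsum fun s1 => ?_
    exact mul_le_mul_left (add_le_add_right (hrec _) _) _
  refine le_trans hstep1 (le_of_eq ?_)
  have hinner : ∀ s1 : ℕ,
      (ENNReal.ofReal cf * (psi Q s1 q : ℝ≥0∞)
        + ∑' s2 : ℕ, (ENNReal.ofReal cf * (psi Q s2 (psi Q s1 q * Q + q - s1) : ℝ≥0∞)
            + G (psi Q s2 (psi Q s1 q * Q + q - s1) * Q + (psi Q s1 q * Q + q - s1) - s2))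
              * poissonPMF κ s2)
      = ∑' s2 : ℕ, (ENNReal.ofReal cf * (psi Q (s1 + s2) q : ℝ≥0∞)
          + G (psi Q (s1 + s2) q * Q + q - (s1 + s2))) * poissonPMF κ s2 := by
    intro s1
    have hsplit : ∀ s2 : ℕ,
        (ENNReal.ofReal cf * (psi Q (s1 + s2) q : ℝ≥0∞)
          + G (psi Q (s1 + s2) q * Q + q - (s1 + s2))) * poissonPMF κ s2
        = ENNReal.ofReal cf * (psi Q s1 q : ℝ≥0∞) * poissonPMF κ s2
          + (ENNReal.ofReal cf * (psi Q s2 (psi Q s1 q * Q + q - s1) : ℝ≥0∞)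
            + G (psi Q s2 (psi Q s1 q * Q + q - s1) * Q + (psi Q s1 q * Q + q - s1) - s2))
              * poissonPMF κ s2 := by
      intro s2
      rw [psi_q_add hQ, ← add_mul]
      congr 1
      rw [psi_add hQ s1 s2 q]
      push_cast
      ring
    rw [tsum_congr hsplit, ENNReal.tsum_add, ENNReal.tsum_mul_left,
      (poissonPMF κ).tsum_coe, mul_one]
  rw [tsum_congr fun s1 => congrArg (· * poissonPMF ν s1) (hinner s1)]
  exact poisson_conv ν κ fun s => ENNReal.ofReal cf * (psi Q s q : ℝ≥0∞)
      + G (psi Q s q * Q + q - s)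

lemma collapse {M : Type*} (ρ : M → PMF ℕ) {Q : ℕ} (hQ : 1 ≤ Q) (cF : M → ℝ)
    (cP : M → M → ℝ) (μ : ℝ≥0) (cf : ℝ) (g : List M) :
    ∀ (j : M), ρ j = poissonPMF μ → cF j = cf →
      (∀ x ∈ g, ρ x = poissonPMF μ ∧ cF x = cf) → ∀ (T : List M) (q : ℕ),
      orH ρ Q cF cP j (g ++ T) q
        ≤ ∑' s : ℕ, (ENNReal.ofReal cf * (psi Q s q : ℝ≥0∞)
            + orF ρ Q cF cP ((j :: g).getLast (List.cons_ne_nil _ _)) T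
                (psi Q s q * Q + q - s))
          * poissonPMF ((g.length + 1 : ℝ≥0) * μ) s := by
  induction g with
  | nil =>
    intro j hρj hcf _ T q
    have hrate : ((List.length ([] : List M) : ℝ≥0) + 1) * μ = μ := by simp
    rw [List.nil_append, orH, hρj, hcf, hrate]
    simp [List.getLast_singleton]
  | cons z g ih =>
    intro j hρj hcf hg T q
    have hz := hg z (List.mem_cons_self)
    have hrec : ∀ q1 : ℕ, orF ρ Q cF cP j ((z :: g) ++ T) q1
        ≤ ∑' s : ℕ, (ENNReal.ofReal cf * (psi Q s q1 : ℝ≥0∞)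
            + orF ρ Q cF cP ((z :: g).getLast (List.cons_ne_nil _ _)) T
                (psi Q s q1 * Q + q1 - s))
          * poissonPMF ((g.length + 1 : ℝ≥0) * μ) s := by
      intro q1
      calc orF ρ Q cF cP j ((z :: g) ++ T) q1
          ≤ orH ρ Q cF cP z (g ++ T) q1 := orF_le_orH _ _ _ _ _ _ _ _
        _ ≤ _ := ih z hz.1 hz.2 (fun x hx => hg x (List.mem_cons_of_mem z hx)) T q1
    have hs := step ρ hQ cF cP j ((z :: g) ++ T) μ ((g.length + 1 : ℝ≥0) * μ) cf
      (orF ρ Q cF cP ((z :: g).getLast (List.cons_ne_nil _ _)) T) hρj hcf hrec q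
    refine le_trans hs (le_of_eq ?_)
    have hrate : μ + ((g.length : ℝ≥0) + 1) * μ = (((z :: g).length : ℝ≥0) + 1) * μ := by
      rw [List.length_cons]
      push_cast
      ring
    rw [hrate, List.getLast_cons (List.cons_ne_nil _ _)]

section MainInd

variable {N : Type*} (ρ : N → PMF ℕ) {Q : ℕ} (bP bF : ℝ) (c0 : N → ℝ) (c : N → N → ℝ)
  (p : List N) (μbar : ℝ≥0) (tmul : Fin p.length → ℕ)
  (ρ' : (Σ k : Fin p.length, Fin (tmul k)) → PMF ℕ)
  (c0' : (Σ k : Fin p.length, Fin (tmul k)) → ℝ)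
  (c' : (Σ k : Fin p.length, Fin (tmul k)) → (Σ k : Fin p.length, Fin (tmul k)) → ℝ)

/-- the refined subcustomers of group `k`. -/
def grpL (k : Fin p.length) : List (Σ k : Fin p.length, Fin (tmul k)) :=
  (List.finRange (tmul k)).map (fun j => ⟨k, j⟩)

/-- the refined path from group `m` on. -/
def tailLL (m : ℕ) : List (Σ k : Fin p.length, Fin (tmul k)) :=
  ((List.finRange p.length).drop m).flatMap (grpL p tmul)

lemma grpL_fst (k : Fin p.length) (x : Σ k : Fin p.length, Fin (tmul k))
    (hx : x ∈ grpL p tmul k) : x.1 = k := by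
  simp only [grpL, List.mem_map] at hx
  obtain ⟨j, -, rfl⟩ := hx
  rfl

lemma grpL_length (k : Fin p.length) : (grpL p tmul k).length = tmul k := by
  simp [grpL]

lemma grpL_ne_nil (htmul : ∀ k, 1 ≤ tmul k) (k : Fin p.length) : grpL p tmul k ≠ [] := by
  intro h
  have h1 := grpL_length p tmul k
  rw [h] at h1
  have h2 := htmul k
  simp at h1
  omega

variable (hQ : 1 ≤ Q) (htmul : ∀ k, 1 ≤ tmul k)
  (hρ : ∀ k : Fin p.length, ρ (p.get k) = poissonPMF ((tmul k : ℝ≥0) * μbar))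
  (hρ' : ∀ x, ρ' x = poissonPMF μbar)
  (hc0' : ∀ x, c0' x = c0 (p.get x.1))
  (hc' : ∀ x y, c' x y = if x.1 = y.1 then 0 else c (p.get x.1) (p.get y.1))

include hQ htmul hρ hρ' hc0' in
lemma hcomp (k : ℕ) (hk : k < p.length)
    (IH : ∀ x : (Σ k : Fin p.length, Fin (tmul k)), (x.1 : ℕ) < k + 1 → ∀ q : ℕ,
      orF ρ' Q (fun x => bF + 2 * c0' x) (fun x y => bP + c0' x + c0' y - c' x y) x
          (tailLL p tmul (k+1)) q
        ≤ orF ρ Q (fun a => bF + 2 * c0 a) (fun a b => bP + c0 a + c0 b - c a b)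
          (p.get x.1) (p.drop (k+1)) q)
    (q : ℕ) :
    orH ρ' Q (fun x => bF + 2 * c0' x) (fun x y => bP + c0' x + c0' y - c' x y)
        ((grpL p tmul ⟨k, hk⟩).head (grpL_ne_nil p tmul htmul _))
        ((grpL p tmul ⟨k, hk⟩).tail ++ tailLL p tmul (k+1)) q
      ≤ orH ρ Q (fun a => bF + 2 * c0 a) (fun a b => bP + c0 a + c0 b - c a b)
        (p.get ⟨k, hk⟩) (p.drop (k+1)) q := by
  set kf : Fin p.length := ⟨k, hk⟩ with hkf
  set y := (grpL p tmul kf).head (grpL_ne_nil p tmul htmul kf) with hy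
  set body := (grpL p tmul kf).tail with hbody
  have hyb : y :: body = grpL p tmul kf := List.cons_head_tail _
  have hcfy : (fun x => bF + 2 * c0' x) y = bF + 2 * c0 (p.get kf) := by
    have h1 : y ∈ grpL p tmul kf := by rw [← hyb]; exact List.mem_cons_self
    simp only
    rw [hc0' y, grpL_fst p tmul kf y h1]
  have hcol := collapse ρ' hQ (fun x => bF + 2 * c0' x)
    (fun x y => bP + c0' x + c0' y - c' x y) μbar (bF + 2 * c0 (p.get kf)) body y
    (hρ' y) hcfy
    (fun x hx => ⟨hρ' x, by
      have h1 : x ∈ grpL p tmul kf := by rw [← hyb]; exact List.mem_cons_of_mem _ hx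
      rw [hc0' x, grpL_fst p tmul kf x h1]⟩)
    (tailLL p tmul (k+1)) q
  set w := ((y :: body).getLast (List.cons_ne_nil _ _)) with hw
  have hwmem : w ∈ grpL p tmul kf := by
    rw [hw, ← hyb] at *
    exact List.getLast_mem _
  have hw1 : w.1 = kf := grpL_fst p tmul kf w hwmem
  have hrate : ((body.length : ℝ≥0) + 1) * μbar = (tmul kf : ℝ≥0) * μbar := by
    have h1 : body.length + 1 = tmul kf := by
      rw [hbody, List.length_tail, ← grpL_length p tmul kf]
      have h2 := List.length_pos_iff.mpr (grpL_ne_nil p tmul htmul kf)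
      omega
    rw [← h1]
    push_cast
    ring
  rw [hrate] at hcol
  refine le_trans hcol ?_
  have hfin : ∑' s : ℕ, (ENNReal.ofReal (bF + 2 * c0 (p.get kf)) * (psi Q s q : ℝ≥0∞)
      + orF ρ' Q (fun x => bF + 2 * c0' x) (fun x y => bP + c0' x + c0' y - c' x y) w
          (tailLL p tmul (k+1)) (psi Q s q * Q + q - s))
        * poissonPMF ((tmul kf : ℝ≥0) * μbar) s
      ≤ ∑' s : ℕ, (ENNReal.ofReal (bF + 2 * c0 (p.get kf)) * (psi Q s q : ℝ≥0∞)
      + orF ρ Q (fun a => bF + 2 * c0 a) (fun a b => bP + c0 a + c0 b - c a b)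
          (p.get kf) (p.drop (k+1)) (psi Q s q * Q + q - s))
        * poissonPMF ((tmul kf : ℝ≥0) * μbar) s := by
    refine ENNReal.tsum_le_tsum fun s => ?_
    have h3 := IH w (by rw [hw1]; simp [hkf]) (psi Q s q * Q + q - s)
    rw [hw1] at h3
    exact mul_le_mul_left (add_le_add_right h3 _) _
  refine le_trans hfin (le_of_eq ?_)
  rw [orH, hρ kf]

include hQ htmul hρ hρ' hc0' hc' in
lemma main_ind : ∀ (n k : ℕ), k + n = p.length →
    ∀ x : (Σ k : Fin p.length, Fin (tmul k)), (x.1 : ℕ) < k → ∀ q : ℕ,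
      orF ρ' Q (fun x => bF + 2 * c0' x) (fun x y => bP + c0' x + c0' y - c' x y) x
          (tailLL p tmul k) q
        ≤ orF ρ Q (fun a => bF + 2 * c0 a) (fun a b => bP + c0 a + c0 b - c a b)
          (p.get x.1) (p.drop k) q := by
  intro n
  induction n with
  | zero =>
    intro k hkn x hx q
    have h1 : tailLL p tmul k = [] := by
      have h2 : (List.finRange p.length).drop k = [] := by
        apply List.drop_eq_nil_of_le
        simp only [List.length_finRange]
        omega
      simp [tailLL, h2]
    have h2 : p.drop k = [] := by
      apply List.drop_eq_nil_of_le
      omega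
    rw [h1, h2, orF_nil, orF_nil]
  | succ n ihn =>
    intro k hkn x hx q
    have hk : k < p.length := by omega
    set kf : Fin p.length := ⟨k, hk⟩ with hkf
    have hdropfin : (List.finRange p.length).drop k
        = kf :: (List.finRange p.length).drop (k+1) := by
      rw [List.drop_eq_getElem_cons (by simp [hk])]
      congr 1
      simp [List.getElem_finRange, hkf]
    have htail_eq : tailLL p tmul k = grpL p tmul kf ++ tailLL p tmul (k+1) := by
      rw [tailLL, hdropfin]
      simp [tailLL]
    have hdropp : p.drop k = p.get kf :: p.drop (k+1) := by
      rw [List.get_eq_getElem, ← List.drop_eq_getElem_cons hk]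
    set y := (grpL p tmul kf).head (grpL_ne_nil p tmul htmul kf) with hy
    set body := (grpL p tmul kf).tail with hbody
    have hyb : y :: body = grpL p tmul kf := List.cons_head_tail _
    have hIH : ∀ x : (Σ k : Fin p.length, Fin (tmul k)), (x.1 : ℕ) < k + 1 → ∀ q : ℕ,
        orF ρ' Q (fun x => bF + 2 * c0' x) (fun x y => bP + c0' x + c0' y - c' x y) x
            (tailLL p tmul (k+1)) q
          ≤ orF ρ Q (fun a => bF + 2 * c0 a) (fun a b => bP + c0 a + c0 b - c a b)
            (p.get x.1) (p.drop (k+1)) q :=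
      fun x hx q => ihn (k+1) (by omega) x hx q
    have hH := hcomp ρ bP bF c0 c p μbar tmul ρ' c0' c' hQ htmul hρ hρ' hc0' k hk hIH
    have hy1 : y.1 = kf := grpL_fst p tmul kf y (by rw [← hyb]; exact List.mem_cons_self)
    have hcP'xy : (fun x y => bP + c0' x + c0' y - c' x y) x y
        = (fun a b => bP + c0 a + c0 b - c a b) (p.get x.1) (p.get kf) := by
      have hne : x.1 ≠ kf := by
        intro h
        rw [h] at hx
        simp [hkf] at hx
      simp only
      rw [hc' x y, hc0' x, hc0' y, hy1, if_neg hne]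
    rw [htail_eq, hdropp, ← hyb, List.cons_append, orF_cons, orF_cons]
    exact min_le_min (hH q)
      (add_le_add (le_of_eq (congrArg ENNReal.ofReal hcP'xy)) (hH Q))

end MainInd

end Aux

/-- subdividing each Poisson customer `i_k` (with rate `t_k·μ̄`) of a path
into `t_k` consecutive co-located subcustomers with independent Poisson(μ̄) demands does
not increase the OR recourse: `Q̄ᴼᴿ_{p'} ≤ Q̄ᴼᴿ_{p}`.  The refined customer set is
`Σ k, Fin (t_k)`; subcustomer `⟨k, j⟩` is located at the point of `i_k` (distance `0` to
subcustomers of the same group), and the refined path `p'` visits the groups in the order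
of `p`, each group consecutively. -/

theorem or_poisson_subdivision
    {N : Type*} (ρ : N → PMF ℕ) (Q : ℕ) (hQ : 1 ≤ Q)
    (bP bF : ℝ) (hbP : 0 ≤ bP) (hbPF : bP ≤ bF)
    (c0 : N → ℝ) (c : N → N → ℝ)
    (hc0 : ∀ i, 0 ≤ c0 i) (hc : ∀ i j, 0 ≤ c i j) (hsymm : ∀ i j, c i j = c j i)
    (htri1 : ∀ i j, c0 j ≤ c0 i + c i j)
    (htri2 : ∀ i j, c i j ≤ c0 i + c0 j)
    (htri3 : ∀ i j k, c i k ≤ c i j + c j k)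
    (p : List N) (hp : p.Nodup)
    (μbar : ℝ≥0) (hμbar : 0 < μbar)
    (tmul : Fin p.length → ℕ) (htmul : ∀ k, 1 ≤ tmul k)
    (hρ : ∀ k : Fin p.length, ρ (p.get k) = poissonPMF ((tmul k : ℝ≥0) * μbar))
    (ρ' : (Σ k : Fin p.length, Fin (tmul k)) → PMF ℕ)
    (hρ' : ∀ x, ρ' x = poissonPMF μbar)
    (c0' : (Σ k : Fin p.length, Fin (tmul k)) → ℝ)
    (hc0' : ∀ x, c0' x = c0 (p.get x.1))
    (c' : (Σ k : Fin p.length, Fin (tmul k)) → (Σ k : Fin p.length, Fin (tmul k)) → ℝ)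
    (hc' : ∀ x y, c' x y = if x.1 = y.1 then 0 else c (p.get x.1) (p.get y.1))
    (p' : List (Σ k : Fin p.length, Fin (tmul k)))
    (hp' : p' = (List.finRange p.length).flatMap
      (fun k => (List.finRange (tmul k)).map (fun j => ⟨k, j⟩))) :
    QbarOR ρ' Q (fun x => bF + 2 * c0' x) (fun x y => bP + c0' x + c0' y - c' x y) p'
      ≤ QbarOR ρ Q (fun a => bF + 2 * c0 a) (fun a b => bP + c0 a + c0 b - c a b) p := by
  rcases Nat.eq_zero_or_pos p.length with hlen | hlen
  · have hpnil : p = [] := List.eq_nil_of_length_eq_zero hlen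
    have hp'nil : p' = [] := by
      rw [hp']
      have h0 : List.finRange p.length = [] := by
        rw [hlen]
        rfl
      rw [h0]
      rfl
    have h2 : QbarOR ρ Q (fun a => bF + 2 * c0 a) (fun a b => bP + c0 a + c0 b - c a b) p
        = 0 := by rw [hpnil]; rfl
    rw [hp'nil, h2]
    exact le_of_eq rfl
  · set kf : Fin p.length := ⟨0, hlen⟩ with hkf
    have hdropfin : (List.finRange p.length).drop 0
        = kf :: (List.finRange p.length).drop 1 := by
      rw [List.drop_eq_getElem_cons (by simpa using hlen)]
      congr 1
      simp [List.getElem_finRange, hkf]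
    have hp'eq : p' = grpL p tmul kf ++ tailLL p tmul 1 := by
      rw [hp', ← List.drop_zero (l := List.finRange p.length), hdropfin]
      rfl
    have hdropp : p.get kf :: p.drop 1 = p := by
      rw [List.get_eq_getElem, ← List.drop_eq_getElem_cons hlen]
      exact List.drop_zero
    set y := (grpL p tmul kf).head (grpL_ne_nil p tmul htmul kf) with hy
    set body := (grpL p tmul kf).tail with hbody
    have hyb : y :: body = grpL p tmul kf := List.cons_head_tail _
    have hIH : ∀ x : (Σ k : Fin p.length, Fin (tmul k)), (x.1 : ℕ) < 0 + 1 → ∀ q : ℕ,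
        orF ρ' Q (fun x => bF + 2 * c0' x) (fun x y => bP + c0' x + c0' y - c' x y) x
            (tailLL p tmul (0+1)) q
          ≤ orF ρ Q (fun a => bF + 2 * c0 a) (fun a b => bP + c0 a + c0 b - c a b)
            (p.get x.1) (p.drop (0+1)) q :=
      fun x hx q => main_ind ρ bP bF c0 c p μbar tmul ρ' c0' c' hQ htmul hρ hρ' hc0' hc'
        (p.length - 1) 1 (by omega) x hx q
    have hH := hcomp ρ bP bF c0 c p μbar tmul ρ' c0' c' hQ htmul hρ hρ' hc0' 0 hlen hIH Q
    calc QbarOR ρ' Q (fun x => bF + 2 * c0' x) (fun x y => bP + c0' x + c0' y - c' x y) p'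
        = orH ρ' Q (fun x => bF + 2 * c0' x) (fun x y => bP + c0' x + c0' y - c' x y)
            y (body ++ tailLL p tmul (0+1)) Q := by
          rw [hp'eq, ← hyb, List.cons_append]
          rfl
      _ ≤ orH ρ Q (fun a => bF + 2 * c0 a) (fun a b => bP + c0 a + c0 b - c a b)
            (p.get kf) (p.drop (0+1)) Q := hH
      _ = QbarOR ρ Q (fun a => bF + 2 * c0 a) (fun a b => bP + c0 a + c0 b - c a b) p := by
          conv_rhs => rw [← hdropp]
          rfl
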